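/- Let B be a binomial ring, M and N B-modules, and n a natural number. For a B-linear map χ : M → N, let χ_* : B[M] → B[N] denote the induced algebra homomorphism with [x] ↦ [χ(x)]. Then: (i) χ_*(I_n(M)) ⊆ I_n(N); (ii) for all B-linear maps χ_1,…,χ_{n+1} : M → N and every ω ∈ B[M], (∑_{I ⊆ {1,…,n+1}} (−1)^{n+1−|I|} (∑_{i∈I} χ_i)_*)(ω) ∈ I_n(N); and (iii) for every r ∈ B, every χ : M → N and every ω ∈ B[M], ((r·χ)_* − ∑_{k=0}^{n} binom(r,k) · ∑_{j=0}^{k} (−1)^{k−j} binom(k,j) (j·χ)_*)(ω) ∈ I_n(N). In other words, M ↦ B[M]_n is a well-defined functor whose arrow maps are numerical of degree n. -/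

import Mathlib

set_option linter.unusedSectionVars false

open Finset

universe u

variable (B : Type u) [CommRing B] [BinomialRing B]
variable (M : Type u) [AddCommGroup M] [Module B M]

/-- The basis symbol `[x]` in the monoid algebra `B[M]` of the additive monoid `M`. -/
noncomputable def brk (x : M) : AddMonoidAlgebra B M := AddMonoidAlgebra.single x 1

/-- The ideal `I_n ⊆ B[M]` (for the sum multiplication `[x][y] = [x+y]`), generated by the
`(n+1)`-fold deviations `[x_1 ⊥ ⋯ ⊥ x_{n+1}] = ∏ ([x_i] − [0])` and the elements
`[r·x] − ∑_{k=0}^n binom(r,k) ([x] − [0])^k`. -/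
noncomputable def augIdeal (n : ℕ) : Ideal (AddMonoidAlgebra B M) :=
  Ideal.span
    ({ω | ∃ x : Fin (n + 1) → M, ω = ∏ i, (brk B M (x i) - brk B M 0)} ∪
      {ω | ∃ (r : B) (x : M), ω =
        brk B M (r • x) -
          ∑ k ∈ Finset.range (n + 1), Ring.choose r k • (brk B M x - brk B M 0) ^ k})

/-- The `n`-th augmentation algebra `B[M]_n = B[M]/I_n`, as a `B`-module. -/
noncomputable def augAlgebra (n : ℕ) : Type u :=
  AddMonoidAlgebra B M ⧸ (augIdeal B M n).restrictScalars B

noncomputable instance (n : ℕ) : AddCommGroup (augAlgebra B M n) :=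
  inferInstanceAs (AddCommGroup (AddMonoidAlgebra B M ⧸ (augIdeal B M n).restrictScalars B))

noncomputable instance (n : ℕ) : Module B (augAlgebra B M n) :=
  inferInstanceAs (Module B (AddMonoidAlgebra B M ⧸ (augIdeal B M n).restrictScalars B))

/-- The quotient map `B[M] → B[M]_n`. -/
noncomputable def augMk (n : ℕ) : AddMonoidAlgebra B M →ₗ[B] augAlgebra B M n :=
  ((augIdeal B M n).restrictScalars B).mkQ

variable (N : Type u) [AddCommGroup N] [Module B N]

/-- The map `χ_* : B[M] → B[N]`, `[x] ↦ [χ(x)]`, induced by a linear map `χ : M → N`. -/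
noncomputable def pushMap (χ : M →ₗ[B] N) :
    AddMonoidAlgebra B M →ₗ[B] AddMonoidAlgebra B N :=
  AddMonoidAlgebra.mapDomainLinearMap B B χ

/-!
The map `χ_*` is the `B`-algebra homomorphism `mapDomainAlgHom` with `χ_*[x] = [χ x]`, so it
carries each generator of `I_n(M)` to a generator of `I_n(N)` of the same shape; this is (i).
The operators in (ii) and (iii) are `B`-linear, so it suffices to evaluate them on the basis
symbols `[x]`. Since `[y + z] = [y][z]`, expanding `∏ ([y_i] − [0])` over subsets and
`([y] − [0])^k` by the binomial theorem shows that these values are exactly the generators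
`[χ_1 x ⊥ ⋯ ⊥ χ_{n+1} x]` and `[r·χ x] − ∑_k binom(r,k) [Δ_k χ x]` of `I_n(N)`.
-/

section Brk

variable {R G : Type u} [CommRing R] [AddCommMonoid G]

lemma brk_zero : brk R G 0 = 1 := rfl

lemma brk_nsmul (k : ℕ) (x : G) : brk R G (k • x) = brk R G x ^ k := by
  simp [brk, AddMonoidAlgebra.single_pow]

lemma brk_sum {ι : Type*} (s : Finset ι) (y : ι → G) :
    brk R G (∑ i ∈ s, y i) = ∏ i ∈ s, brk R G (y i) := by
  simp [brk, AddMonoidAlgebra.prod_single]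

lemma smul_brk (b : R) (x : G) : b • brk R G x = AddMonoidAlgebra.single x b := by
  simp [brk]

lemma prod_brk_sub_brk_zero {ι : Type*} [Fintype ι] (y : ι → G) :
    ∏ i, (brk R G (y i) - brk R G 0) =
      ∑ I : Finset ι, (-1 : ℤ) ^ (Fintype.card ι - #I) • brk R G (∑ i ∈ I, y i) := by
  classical
  simp_rw [brk_zero, sub_eq_add_neg]
  rw [Fintype.prod_add]
  refine sum_congr rfl fun I _ => ?_
  rw [brk_sum, prod_const, card_compl, zsmul_eq_mul]
  push_cast
  ring

lemma brk_sub_brk_zero_pow (k : ℕ) (y : G) :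
    (brk R G y - brk R G 0) ^ k =
      ∑ j ∈ range (k + 1),
        ((-1 : ℤ) ^ (k - j) * (k.choose j : ℤ)) • brk R G (j • y) := by
  rw [brk_zero, sub_eq_add_neg, add_pow]
  refine sum_congr rfl fun j _ => ?_
  rw [brk_nsmul, zsmul_eq_mul]
  push_cast
  ring

lemma map_mem_of_forall_map_brk_mem {A : Type*} [AddCommGroup A] [Module R A]
    (f : AddMonoidAlgebra R G →ₗ[R] A) {p : Submodule R A} (h : ∀ x, f (brk R G x) ∈ p)
    (ω : AddMonoidAlgebra R G) : f ω ∈ p := by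
  induction ω using AddMonoidAlgebra.induction_linear with
  | zero => simp
  | add ω ω' hω hω' => simpa using p.add_mem hω hω'
  | single x b => simpa [← smul_brk] using p.smul_mem b (h x)

end Brk

variable {B M N}

lemma pushMap_apply (χ : M →ₗ[B] N) (ω : AddMonoidAlgebra B M) :
    pushMap B M N χ ω = AddMonoidAlgebra.mapDomainAlgHom B B (χ : M →+ N) ω :=
  rfl

lemma pushMap_brk (χ : M →ₗ[B] N) (x : M) : pushMap B M N χ (brk B M x) = brk B N (χ x) :=
  AddMonoidAlgebra.mapDomainLinearMap_single _ _ _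

variable (n : ℕ)

lemma prod_brk_sub_brk_zero_mem_augIdeal (x : Fin (n + 1) → M) :
    ∏ i, (brk B M (x i) - brk B M 0) ∈ augIdeal B M n :=
  Ideal.subset_span (Or.inl ⟨x, rfl⟩)

lemma brk_smul_sub_sum_choose_mem_augIdeal (r : B) (x : M) :
    brk B M (r • x) - ∑ k ∈ range (n + 1), Ring.choose r k • (brk B M x - brk B M 0) ^ k
      ∈ augIdeal B M n :=
  Ideal.subset_span (Or.inr ⟨r, x, rfl⟩)

lemma pushMap_mem_augIdeal (χ : M →ₗ[B] N) {ω : AddMonoidAlgebra B M}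
    (hω : ω ∈ augIdeal B M n) : pushMap B M N χ ω ∈ augIdeal B N n := by
  rw [pushMap_apply, ← Ideal.mem_comap]
  refine Ideal.span_le.2 ?_ hω
  rintro _ (⟨x, rfl⟩ | ⟨r, x, rfl⟩) <;>
    simp only [SetLike.mem_coe, Ideal.mem_comap, map_prod, map_sub, map_sum, map_smul, map_pow,
      ← pushMap_apply, pushMap_brk, map_zero]
  · exact prod_brk_sub_brk_zero_mem_augIdeal n (χ ∘ x)
  · exact brk_smul_sub_sum_choose_mem_augIdeal n r (χ x)

lemma sum_zsmul_pushMap_brk {ι : Type*} [Fintype ι] (χ : ι → M →ₗ[B] N) (x : M) :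
    (∑ I : Finset ι, (-1 : ℤ) ^ (Fintype.card ι - #I) • pushMap B M N (∑ i ∈ I, χ i))
        (brk B M x) = ∏ i, (brk B N (χ i x) - brk B N 0) := by
  simp [prod_brk_sub_brk_zero, LinearMap.sum_apply, pushMap_brk]

lemma pushMap_smul_sub_sum_choose_apply_brk (r : B) (χ : M →ₗ[B] N) (x : M) :
    (pushMap B M N (r • χ) -
        ∑ k ∈ range (n + 1), Ring.choose r k •
          ∑ j ∈ range (k + 1),
            ((-1 : ℤ) ^ (k - j) * (k.choose j : ℤ)) • pushMap B M N ((j : B) • χ))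
        (brk B M x) =
      brk B N (r • χ x) -
        ∑ k ∈ range (n + 1), Ring.choose r k • (brk B N (χ x) - brk B N 0) ^ k := by
  simp [brk_sub_brk_zero_pow, LinearMap.sum_apply, pushMap_brk, Nat.cast_smul_eq_nsmul]

/-- `M ↦ B[M]_n` is a functor whose arrow maps `χ ↦ χ_*` are numerical of degree `n`:
(i) `χ_*` preserves the ideals `I_n`; (ii) the `n`-th deviation of `χ ↦ χ_*` lands in `I_n(N)`;
(iii) the numericality defect of `χ ↦ χ_*` lands in `I_n(N)`. -/
theorem pushMap_numerical (B : Type u) [CommRing B] [BinomialRing B]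
    (M : Type u) [AddCommGroup M] [Module B M]
    (N : Type u) [AddCommGroup N] [Module B N] (n : ℕ) :
    (∀ χ : M →ₗ[B] N, ∀ ω ∈ augIdeal B M n, pushMap B M N χ ω ∈ augIdeal B N n) ∧
      (∀ (χ : Fin (n + 1) → (M →ₗ[B] N)) (ω : AddMonoidAlgebra B M),
        (∑ I : Finset (Fin (n + 1)),
            (-1 : ℤ) ^ (n + 1 - I.card) • pushMap B M N (∑ i ∈ I, χ i)) ω ∈ augIdeal B N n) ∧
      (∀ (r : B) (χ : M →ₗ[B] N) (ω : AddMonoidAlgebra B M),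
        (pushMap B M N (r • χ) -
            ∑ k ∈ Finset.range (n + 1),
              Ring.choose r k •
                ∑ j ∈ Finset.range (k + 1),
                  ((-1 : ℤ) ^ (k - j) * (k.choose j : ℤ)) • pushMap B M N ((j : B) • χ)) ω
          ∈ augIdeal B N n) := by
  refine ⟨fun χ _ hω => pushMap_mem_augIdeal n χ hω, fun χ ω => ?_, fun r χ ω => ?_⟩
  · refine map_mem_of_forall_map_brk_mem _ (p := (augIdeal B N n).restrictScalars B)
      (fun x => ?_) ω
    have hx := sum_zsmul_pushMap_brk χ x
    rw [Fintype.card_fin] at hx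
    rw [Submodule.restrictScalars_mem, hx]
    exact prod_brk_sub_brk_zero_mem_augIdeal n fun i => χ i x
  · refine map_mem_of_forall_map_brk_mem _ (p := (augIdeal B N n).restrictScalars B)
      (fun x => ?_) ω
    rw [Submodule.restrictScalars_mem, pushMap_smul_sub_sum_choose_apply_brk]
    exact brk_smul_sub_sum_choose_mem_augIdeal n r (χ x)
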